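/- arXiv:1409.4346 — 2 statements merged into one kernel-verified Lean document; each statement's English description precedes it below -/
import Mathlib

section
/- Fix a dimension n ≥ 1. Suppose that the logarithmic Brunn–Minkowski inequality holds for the Lebesgue measure in ℝⁿ, i.e. for all symmetric convex bodies K, L in ℝⁿ and all λ ∈ (0,1) one has vol(λ·K +₀ (1−λ)·L) ≥ vol(K)^λ · vol(L)^{1−λ}. Then for every even log-concave density f on ℝⁿ, every pair of symmetric convex bodies K, L in ℝⁿ and every λ ∈ (0,1), one has ∫_{λ·K +₀ (1−λ)·L} f(x) dx ≥ (∫_K f(x) dx)^λ · (∫_L f(x) dx)^{1−λ}. -/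
/-!
Superlevel sets of an even log-concave `f` are symmetric and convex, and
`λ • {f > s} + (1-λ) • {f > t} ⊆ {f > s^λ t^(1-λ)}`. The closures of the slices `{f > s} ∩ K` and
`{f > t} ∩ L` are symmetric convex bodies (unless a slice is null) whose log-combination lies in
their Minkowski combination, so the Lebesgue inequality gives
`|{f > s} ∩ K|^λ |{f > t} ∩ L|^(1-λ) ≤ |{f > s^λ t^(1-λ)} ∩ (λ·K +₀ (1-λ)·L)|`.
After the substitution `t = e^(-a)` in the layer-cake formula for `∫_S f`, this is the hypothesis
of the one-dimensional Prékopa–Leindler inequality, which follows from the one-dimensional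
Brunn–Minkowski inequality applied to level sets.
-/

open MeasureTheory Set Pointwise

noncomputable section

/-- A convex body in `ℝⁿ`: a compact convex set with nonempty interior. -/
def IsConvexBody {n : ℕ} (K : Set (EuclideanSpace ℝ (Fin n))) : Prop :=
  Convex ℝ K ∧ IsCompact K ∧ (interior K).Nonempty

/-- The support function of a set. -/
def suppFun {n : ℕ} (K : Set (EuclideanSpace ℝ (Fin n)))
    (u : EuclideanSpace ℝ (Fin n)) : ℝ :=
  sSup ((fun y => (inner ℝ u y : ℝ)) '' K)

/-- The logarithmic combination `λ·K +₀ (1-λ)·L`. -/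
def logComb {n : ℕ} (lam : ℝ) (K L : Set (EuclideanSpace ℝ (Fin n))) :
    Set (EuclideanSpace ℝ (Fin n)) :=
  {x | ∀ u : EuclideanSpace ℝ (Fin n), ‖u‖ = 1 →
    (inner ℝ x u : ℝ) ≤ suppFun K u ^ lam * suppFun L u ^ (1 - lam)}

/-- An even log-concave density on `ℝⁿ`. -/
def IsEvenLogConcaveDensity {n : ℕ} (f : EuclideanSpace ℝ (Fin n) → ℝ) : Prop :=
  Integrable f volume ∧ (∀ x, 0 ≤ f x) ∧ (∀ x, f (-x) = f x) ∧
  ∀ x y : EuclideanSpace ℝ (Fin n), ∀ lam : ℝ, lam ∈ Set.Ioo (0:ℝ) 1 →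
    f x ^ lam * f y ^ (1 - lam) ≤ f (lam • x + (1 - lam) • y)

open scoped ENNReal NNReal

namespace Real

theorem volume_add_volume_le_volume_add_of_isCompact {A B : Set ℝ} (hA : IsCompact A)
    (hB : IsCompact B) (hA0 : A.Nonempty) (hB0 : B.Nonempty) :
    volume A + volume B ≤ volume (A + B) := by
  -- The translates `sSup A + B` and `sInf B + A` lie in `A + B` and meet only at `sSup A + sInf B`.
  set a := sSup A
  set b := sInf B
  have hunion : (a +ᵥ B) ∪ (b +ᵥ A) ⊆ A + B := by
    rintro _ (⟨y, hy, rfl⟩ | ⟨y, hy, rfl⟩)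
    · exact add_mem_add (hA.sSup_mem hA0) hy
    · show b + y ∈ A + B
      rw [add_comm b y]
      exact add_mem_add hy (hB.sInf_mem hB0)
  have hinter : (a +ᵥ B) ∩ (b +ᵥ A) ⊆ {a + b} := by
    rintro _ ⟨⟨y, hy, rfl⟩, ⟨z, hz, hyz⟩⟩
    have := csInf_le hB.bddBelow hy
    have := le_csSup hA.bddAbove hz
    simp only [vadd_eq_add] at hyz ⊢
    rw [mem_singleton_iff]
    linarith
  calc volume A + volume B = volume (a +ᵥ B) + volume (b +ᵥ A) := by
        rw [measure_vadd, measure_vadd, add_comm]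
    _ = volume ((a +ᵥ B) ∪ (b +ᵥ A)) :=
        (measure_union₀ (hA.isClosed.measurableSet.const_vadd b).nullMeasurableSet
          (measure_mono_null hinter (measure_singleton _))).symm
    _ ≤ volume (A + B) := measure_mono hunion

theorem volume_add_volume_le_volume_add {A B : Set ℝ} (hA : MeasurableSet A)
    (hB : MeasurableSet B) (hA0 : A.Nonempty) (hB0 : B.Nonempty) :
    volume A + volume B ≤ volume (A + B) := by
  obtain ⟨a, ha⟩ := hA0
  obtain ⟨b, hb⟩ := hB0
  have hinner : ∀ S : Set ℝ, MeasurableSet S →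
      volume S = ⨆ K : {K : Set ℝ // K ⊆ S ∧ IsCompact K}, volume (K : Set ℝ) := by
    intro S hS
    rw [hS.measure_eq_iSup_isCompact]
    simp_rw [iSup_and', iSup_subtype']
  have : ∀ S : Set ℝ, Nonempty {K : Set ℝ // K ⊆ S ∧ IsCompact K} :=
    fun S => ⟨⟨∅, empty_subset S, isCompact_empty⟩⟩
  rw [hinner A hA, hinner B hB]
  refine ENNReal.iSup_add_iSup_le fun ⟨K, hKA, hK⟩ ⟨L, hLB, hL⟩ => ?_
  calc volume K + volume L ≤ volume (insert a K) + volume (insert b L) :=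
        add_le_add (measure_mono (subset_insert _ _)) (measure_mono (subset_insert _ _))
    _ ≤ volume (insert a K + insert b L) :=
        volume_add_volume_le_volume_add_of_isCompact (hK.insert a) (hL.insert b)
          (insert_nonempty _ _) (insert_nonempty _ _)
    _ ≤ volume (A + B) :=
        measure_mono (add_subset_add (insert_subset ha hKA) (insert_subset hb hLB))

theorem ofReal_mul_volume_add_le_volume_smul_add_smul {s t : ℝ} (hs : 0 ≤ s) (ht : 0 ≤ t)
    {A B : Set ℝ} (hA : MeasurableSet A) (hB : MeasurableSet B) (hA0 : A.Nonempty)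
    (hB0 : B.Nonempty) :
    ENNReal.ofReal s * volume A + ENNReal.ofReal t * volume B ≤ volume (s • A + t • B) := by
  have hscale : ∀ {r : ℝ}, 0 ≤ r → ∀ S : Set ℝ, volume (r • S) = ENNReal.ofReal r * volume S :=
    fun hr S => by rw [Measure.addHaar_smul_of_nonneg _ hr, Module.finrank_self, pow_one]
  rw [← hscale hs, ← hscale ht]
  exact volume_add_volume_le_volume_add (hA.const_smul₀ s) (hB.const_smul₀ t) hA0.smul_set
    hB0.smul_set

end Real

namespace ENNReal

theorem rpow_mul_rpow_le_add {lam : ℝ} (hlam : lam ∈ Ioo 0 1) (x y : ℝ≥0∞) :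
    x ^ lam * y ^ (1 - lam) ≤ ENNReal.ofReal lam * x + ENNReal.ofReal (1 - lam) * y := by
  have h1 : 0 < 1 - lam := sub_pos.2 hlam.2
  rcases eq_or_ne x ⊤ with rfl | hx
  · simp [mul_top (ofReal_pos.2 hlam.1).ne']
  rcases eq_or_ne y ⊤ with rfl | hy
  · simp [mul_top (ofReal_pos.2 h1).ne']
  lift x to ℝ≥0 using hx
  lift y to ℝ≥0 using hy
  have hw : lam.toNNReal + (1 - lam).toNNReal = 1 := by
    rw [← Real.toNNReal_add hlam.1.le h1.le, add_sub_cancel, Real.toNNReal_one]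
  have := NNReal.geom_mean_le_arith_mean2_weighted _ _ x y hw
  rw [Real.coe_toNNReal _ hlam.1.le, Real.coe_toNNReal _ h1.le] at this
  rw [← coe_rpow_of_nonneg _ hlam.1.le, ← coe_rpow_of_nonneg _ h1.le, ENNReal.ofReal,
    ENNReal.ofReal]
  exact_mod_cast this

theorem min_le_rpow_mul_rpow {lam : ℝ} (h0 : 0 ≤ lam) (h1 : lam ≤ 1) (x y : ℝ≥0∞) :
    min x y ≤ x ^ lam * y ^ (1 - lam) :=
  calc min x y = min x y ^ lam * min x y ^ (1 - lam) := by
        rw [← rpow_add_of_nonneg _ _ h0 (sub_nonneg.2 h1), add_sub_cancel, rpow_one]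
    _ ≤ x ^ lam * y ^ (1 - lam) := by
        gcongr
        exacts [min_le_left x y, min_le_right x y]

end ENNReal

section LayerCake

variable {α : Type*} [MeasurableSpace α] (μ : Measure α)

theorem antitone_measure_ofReal_lt (H : α → ℝ≥0∞) :
    Antitone fun s : ℝ => μ {x | ENNReal.ofReal s < H x} :=
  fun _ _ hst => measure_mono fun _ hx => (ENNReal.ofReal_le_ofReal hst).trans_lt hx

theorem lintegral_eq_setLIntegral_Ioo_measure_lt {H : α → ℝ≥0∞} (hH : AEMeasurable H μ)
    (hH1 : ∀ x, H x ≤ 1) :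
    ∫⁻ x, H x ∂μ = ∫⁻ s in Ioo 0 1, μ {x | ENNReal.ofReal s < H x} := by
  have hfin : ∀ x, H x ≠ ⊤ := fun x => ne_top_of_le_ne_top ENNReal.one_ne_top (hH1 x)
  have hempty : ∀ s ∈ Ici (1 : ℝ), {x | ENNReal.ofReal s < H x} = ∅ := fun s hs =>
    eq_empty_of_forall_notMem fun x hx =>
      ((hH1 x).trans (ENNReal.one_le_ofReal.2 hs)).not_gt hx
  calc ∫⁻ x, H x ∂μ = ∫⁻ x, ENNReal.ofReal (H x).toReal ∂μ := by
        simp only [ENNReal.ofReal_toReal (hfin _)]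
    _ = ∫⁻ s in Ioi 0, μ {x | s < (H x).toReal} :=
        lintegral_eq_lintegral_meas_lt μ (ae_of_all _ fun _ => ENNReal.toReal_nonneg)
          hH.ennreal_toReal
    _ = ∫⁻ s in Ioi 0, μ {x | ENNReal.ofReal s < H x} := by
        refine setLIntegral_congr_fun measurableSet_Ioi fun s hs => ?_
        simp only [ENNReal.ofReal_lt_iff_lt_toReal (le_of_lt hs) (hfin _)]
    _ = ∫⁻ s in Ioo 0 1, μ {x | ENNReal.ofReal s < H x} := by
        rw [← Ioo_union_Ici_eq_Ioi zero_lt_one, lintegral_union measurableSet_Ici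
          ((Iio_disjoint_Ici le_rfl).mono_left Ioo_subset_Iio_self),
          setLIntegral_congr_fun measurableSet_Ici fun s hs => by rw [hempty s hs, measure_empty],
          lintegral_zero, add_zero]

theorem setLIntegral_Ioo_measure_lt_le_lintegral {H : α → ℝ≥0∞} (hH : AEMeasurable H μ) :
    ∫⁻ s in Ioo 0 1, μ {x | ENNReal.ofReal s < H x} ≤ ∫⁻ x, H x ∂μ :=
  calc ∫⁻ s in Ioo 0 1, μ {x | ENNReal.ofReal s < H x}
      = ∫⁻ s in Ioo 0 1, μ {x | ENNReal.ofReal s < min (H x) 1} := by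
        refine setLIntegral_congr_fun measurableSet_Ioo fun s hs => ?_
        simp only [lt_min_iff, ENNReal.ofReal_lt_one.2 hs.2, and_true]
    _ = ∫⁻ x, min (H x) 1 ∂μ :=
        (lintegral_eq_setLIntegral_Ioo_measure_lt μ (hH.min aemeasurable_const)
          fun _ => min_le_right _ _).symm
    _ ≤ ∫⁻ x, H x ∂μ := lintegral_mono fun _ => min_le_left _ _

end LayerCake

section PrekopaLeindler

variable {lam : ℝ} {F G M : ℝ → ℝ≥0∞}

theorem lintegral_add_le_lintegral_of_iSup_eq_one (h0 : 0 ≤ lam) (h1 : lam ≤ 1)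
    (hF : Measurable F) (hG : Measurable G) (hM : Measurable M) (hF1 : ⨆ a, F a = 1)
    (hG1 : ⨆ b, G b = 1) (h : ∀ a b, min (F a) (G b) ≤ M (lam * a + (1 - lam) * b)) :
    ENNReal.ofReal lam * (∫⁻ a, F a) + ENNReal.ofReal (1 - lam) * ∫⁻ b, G b ≤ ∫⁻ c, M c := by
  have hnonempty : ∀ {H : ℝ → ℝ≥0∞}, ⨆ a, H a = 1 → ∀ s < 1,
      {a | ENNReal.ofReal s < H a}.Nonempty := fun hH s hs =>
    let ⟨a, ha⟩ := lt_iSup_iff.1 (hH ▸ ENNReal.ofReal_lt_one.2 hs); ⟨a, ha⟩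
  have hlevel : ∀ s ∈ Ioo (0 : ℝ) 1,
      ENNReal.ofReal lam * volume {a | ENNReal.ofReal s < F a}
        + ENNReal.ofReal (1 - lam) * volume {b | ENNReal.ofReal s < G b}
        ≤ volume {c | ENNReal.ofReal s < M c} := by
    intro s hs
    refine (Real.ofReal_mul_volume_add_le_volume_smul_add_smul h0 (sub_nonneg.2 h1)
      (measurableSet_lt measurable_const hF) (measurableSet_lt measurable_const hG)
      (hnonempty hF1 s hs.2) (hnonempty hG1 s hs.2)).trans (measure_mono ?_)
    rintro _ ⟨_, ⟨a, ha, rfl⟩, _, ⟨b, hb, rfl⟩, rfl⟩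
    exact (lt_min ha hb).trans_le (h a b)
  have hmeas : ∀ H : ℝ → ℝ≥0∞, Measurable fun s : ℝ => volume {x | ENNReal.ofReal s < H x} :=
    fun H => (antitone_measure_ofReal_lt volume H).measurable
  have hle_one : ∀ {H : ℝ → ℝ≥0∞}, ⨆ a, H a = 1 → ∀ a, H a ≤ 1 :=
    fun {H} hH a => hH ▸ le_iSup H a
  rw [lintegral_eq_setLIntegral_Ioo_measure_lt volume hF.aemeasurable (hle_one hF1),
    lintegral_eq_setLIntegral_Ioo_measure_lt volume hG.aemeasurable (hle_one hG1),
    ← lintegral_const_mul _ (hmeas F), ← lintegral_const_mul _ (hmeas G),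
    ← lintegral_add_left ((hmeas F).const_mul _)]
  exact (setLIntegral_mono (hmeas M) hlevel).trans
    (setLIntegral_Ioo_measure_lt_le_lintegral volume hM.aemeasurable)

theorem prekopa_leindler (hlam : lam ∈ Ioo 0 1) (hF : Measurable F) (hG : Measurable G)
    (hM : Measurable M) (hFtop : ⨆ a, F a ≠ ⊤) (hGtop : ⨆ b, G b ≠ ⊤)
    (h : ∀ a b, F a ^ lam * G b ^ (1 - lam) ≤ M (lam * a + (1 - lam) * b)) :
    (∫⁻ a, F a) ^ lam * (∫⁻ b, G b) ^ (1 - lam) ≤ ∫⁻ c, M c := by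
  obtain ⟨h0, h1⟩ := hlam
  have h1' : 0 < 1 - lam := sub_pos.2 h1
  set cF := ⨆ a, F a
  set cG := ⨆ b, G b
  rcases eq_or_ne cF 0 with hcF | hcF
  · simp [ENNReal.iSup_eq_zero.1 hcF, ENNReal.zero_rpow_of_pos h0]
  rcases eq_or_ne cG 0 with hcG | hcG
  · simp [ENNReal.iSup_eq_zero.1 hcG, ENNReal.zero_rpow_of_pos h1']
  -- Rescale `F`, `G` to supremum `1` and `M` by the matching factor `c`.
  set c := cF ^ lam * cG ^ (1 - lam)
  have hc0 : c ≠ 0 := by positivity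
  have hctop : c ≠ ⊤ := ENNReal.mul_ne_top (by finiteness) (by finiteness)
  have hrescale : ∀ (d : ℝ≥0∞) (H : ℝ → ℝ≥0∞), d ≠ 0 → d ≠ ⊤ → Measurable H →
      ∫⁻ a, H a = d * ∫⁻ a, d⁻¹ * H a := fun d H hd hd' hH => by
    rw [lintegral_const_mul _ hH, ← mul_assoc, ENNReal.mul_inv_cancel hd hd', one_mul]
  have hnormalize : ∀ {H : ℝ → ℝ≥0∞}, ⨆ a, H a ≠ 0 → ⨆ a, H a ≠ ⊤ →
      ⨆ a, (⨆ a, H a)⁻¹ * H a = 1 := fun hH0 hHtop => by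
    rw [← ENNReal.mul_iSup, ENNReal.inv_mul_cancel hH0 hHtop]
  have hnorm := lintegral_add_le_lintegral_of_iSup_eq_one h0.le h1.le (hF.const_mul cF⁻¹)
    (hG.const_mul cG⁻¹) (hM.const_mul c⁻¹) (hnormalize hcF hFtop) (hnormalize hcG hGtop)
    fun a b => by
      refine (ENNReal.min_le_rpow_mul_rpow h0.le h1.le _ _).trans ?_
      rw [ENNReal.mul_rpow_of_nonneg _ _ h0.le, ENNReal.mul_rpow_of_nonneg _ _ h1'.le,
        mul_mul_mul_comm, ENNReal.inv_rpow, ENNReal.inv_rpow,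
        ← ENNReal.mul_inv (Or.inl (by positivity)) (Or.inl (by finiteness))]
      gcongr
      exact h a b
  calc (∫⁻ a, F a) ^ lam * (∫⁻ b, G b) ^ (1 - lam)
      = c * ((∫⁻ a, cF⁻¹ * F a) ^ lam * (∫⁻ b, cG⁻¹ * G b) ^ (1 - lam)) := by
        rw [hrescale cF F hcF hFtop hF, hrescale cG G hcG hGtop hG,
          ENNReal.mul_rpow_of_nonneg _ _ h0.le, ENNReal.mul_rpow_of_nonneg _ _ h1'.le,
          mul_mul_mul_comm]
    _ ≤ c * (ENNReal.ofReal lam * (∫⁻ a, cF⁻¹ * F a)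
          + ENNReal.ofReal (1 - lam) * ∫⁻ b, cG⁻¹ * G b) := by
        gcongr c * ?_
        exact ENNReal.rpow_mul_rpow_le_add ⟨h0, h1⟩ _ _
    _ ≤ c * ∫⁻ c', c⁻¹ * M c' := by gcongr
    _ = ∫⁻ c', M c' := (hrescale c M hc0 hctop hM).symm

end PrekopaLeindler

section ExpLayer

variable {α : Type*} [MeasurableSpace α] {μ : Measure α} {f : α → ℝ}

/-- The integrand of the layer-cake formula `∫ f dμ = ∫₀^∞ μ {f > t} dt` after the substitution
`t = e^(-a)`. -/
def expLayer (μ : Measure α) (f : α → ℝ) (a : ℝ) : ℝ≥0∞ :=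
  ENNReal.ofReal (Real.exp (-a)) * μ {x | Real.exp (-a) < f x}

theorem measurable_expLayer : Measurable (expLayer μ f) := by
  have hmono : Monotone fun a : ℝ => μ {x | Real.exp (-a) < f x} := fun a b hab =>
    measure_mono fun x hx => lt_of_le_of_lt (Real.exp_le_exp.2 (neg_le_neg hab)) hx
  exact (ENNReal.measurable_ofReal.comp (by fun_prop)).mul hmono.measurable

theorem lintegral_expLayer (hf0 : 0 ≤ᵐ[μ] f) (hfm : AEMeasurable f μ) :
    ∫⁻ a, expLayer μ f a = ∫⁻ x, ENNReal.ofReal (f x) ∂μ := by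
  have himage : (fun a : ℝ => Real.exp (-a)) '' univ = Ioi 0 := by
    rw [image_univ, ← Real.range_exp]
    exact neg_surjective.range_comp Real.exp
  rw [lintegral_eq_lintegral_meas_lt μ hf0 hfm, ← himage,
    lintegral_image_eq_lintegral_abs_deriv_mul MeasurableSet.univ
      (fun a _ => (hasDerivAt_neg a).exp.hasDerivWithinAt)
      (Real.exp_injective.comp neg_injective).injOn, Measure.restrict_univ]
  congr 1
  ext a
  simp [expLayer, abs_of_pos (Real.exp_pos _)]

theorem expLayer_le {c : ℝ} (hf : ∀ x, f x ≤ c) (a : ℝ) :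
    expLayer μ f a ≤ ENNReal.ofReal c * μ univ := by
  rcases eq_empty_or_nonempty {x | Real.exp (-a) < f x} with hempty | ⟨x, hx⟩
  · simp [expLayer, hempty]
  · exact mul_le_mul' (ENNReal.ofReal_le_ofReal (hx.le.trans (hf x)))
      (measure_mono (subset_univ _))

theorem expLayer_rpow_mul_rpow_le {ν ρ : Measure α} {lam : ℝ} (h0 : 0 ≤ lam) (h1 : lam ≤ 1)
    (h : ∀ s t : ℝ, 0 < s → 0 < t →
      μ {x | s < f x} ^ lam * ν {x | t < f x} ^ (1 - lam)
        ≤ ρ {x | s ^ lam * t ^ (1 - lam) < f x})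
    (a b : ℝ) :
    expLayer μ f a ^ lam * expLayer ν f b ^ (1 - lam)
      ≤ expLayer ρ f (lam * a + (1 - lam) * b) := by
  have hexp : Real.exp (-a) ^ lam * Real.exp (-b) ^ (1 - lam)
      = Real.exp (-(lam * a + (1 - lam) * b)) := by
    rw [← Real.exp_mul, ← Real.exp_mul, ← Real.exp_add]
    ring_nf
  calc expLayer μ f a ^ lam * expLayer ν f b ^ (1 - lam)
      = ENNReal.ofReal (Real.exp (-a) ^ lam * Real.exp (-b) ^ (1 - lam))
          * (μ {x | Real.exp (-a) < f x} ^ lam * ν {x | Real.exp (-b) < f x} ^ (1 - lam)) := by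
        rw [expLayer, expLayer, ENNReal.mul_rpow_of_nonneg _ _ h0,
          ENNReal.mul_rpow_of_nonneg _ _ (sub_nonneg.2 h1), mul_mul_mul_comm,
          ENNReal.ofReal_rpow_of_pos (Real.exp_pos _),
          ENNReal.ofReal_rpow_of_pos (Real.exp_pos _), ENNReal.ofReal_mul (by positivity)]
    _ ≤ ENNReal.ofReal (Real.exp (-a) ^ lam * Real.exp (-b) ^ (1 - lam))
          * ρ {x | Real.exp (-a) ^ lam * Real.exp (-b) ^ (1 - lam) < f x} := by
        gcongr
        exact h _ _ (Real.exp_pos _) (Real.exp_pos _)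
    _ = expLayer ρ f (lam * a + (1 - lam) * b) := by rw [hexp, expLayer]

end ExpLayer

section Separation

variable {E : Type*} [NormedAddCommGroup E] [InnerProductSpace ℝ E] [CompleteSpace E]

theorem exists_norm_eq_one_inner_lt_of_notMem {W : Set E} (hWc : Convex ℝ W) (hW : IsClosed W)
    (hW0 : W.Nonempty) {x : E} (hx : x ∉ W) :
    ∃ u : E, ‖u‖ = 1 ∧ ∀ y ∈ W, inner ℝ u y < inner ℝ u x := by
  obtain ⟨g, r, hgW, hgx⟩ := geometric_hahn_banach_closed_point hWc hW hx
  set w := (InnerProductSpace.toDual ℝ E).symm g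
  have hw : ∀ y, inner ℝ w y = g y := fun y => InnerProductSpace.toDual_symm_apply
  have hw0 : w ≠ 0 := by
    rintro hw0
    obtain ⟨y, hy⟩ := hW0
    have := (hgW y hy).trans hgx
    simp [← hw, hw0] at this
  refine ⟨‖w‖⁻¹ • w, by simp [norm_smul, hw0], fun y hy => ?_⟩
  simp only [real_inner_smul_left, hw]
  exact mul_lt_mul_of_pos_left ((hgW y hy).trans hgx) (by positivity)

end Separation

section SupportFunction

variable {n : ℕ} {A B K L : Set (EuclideanSpace ℝ (Fin n))}

theorem le_suppFun (hK : IsCompact K) (u : EuclideanSpace ℝ (Fin n))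
    {y : EuclideanSpace ℝ (Fin n)} (hy : y ∈ K) : inner ℝ u y ≤ suppFun K u :=
  le_csSup ((hK.image (continuous_const.inner continuous_id)).bddAbove) (mem_image_of_mem _ hy)

theorem suppFun_nonneg (hK : IsCompact K) (hK0 : 0 ∈ K) (u : EuclideanSpace ℝ (Fin n)) :
    0 ≤ suppFun K u := by
  simpa using le_suppFun hK u hK0

theorem suppFun_mono (hK : IsCompact K) (hA : A.Nonempty) (hAK : A ⊆ K)
    (u : EuclideanSpace ℝ (Fin n)) : suppFun A u ≤ suppFun K u :=
  csSup_le (hA.image _) (forall_mem_image.2 fun _ hy => le_suppFun hK u (hAK hy))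

theorem exists_suppFun_eq_inner (hK : IsCompact K) (hK0 : K.Nonempty)
    (u : EuclideanSpace ℝ (Fin n)) : ∃ y ∈ K, suppFun K u = inner ℝ u y := by
  obtain ⟨y, hy, hmax⟩ := hK.exists_isMaxOn hK0
    (continuous_const.inner continuous_id : Continuous fun y => inner ℝ u y).continuousOn
  exact ⟨y, hy, le_antisymm (csSup_le (hK0.image _) (forall_mem_image.2 hmax))
    (le_suppFun hK u hy)⟩

theorem isClosed_logComb (lam : ℝ) (K L : Set (EuclideanSpace ℝ (Fin n))) :
    IsClosed (logComb lam K L) := by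
  simp only [logComb, ofPred_forall]
  exact isClosed_iInter fun u => isClosed_iInter fun _ =>
    isClosed_le (continuous_id.inner continuous_const) continuous_const

theorem logComb_mono {lam : ℝ} (h0 : 0 ≤ lam) (h1 : lam ≤ 1) (hA : IsCompact A)
    (hB : IsCompact B) (hA0 : 0 ∈ A) (hB0 : 0 ∈ B) (hK : IsCompact K) (hL : IsCompact L)
    (hAK : A ⊆ K) (hBL : B ⊆ L) : logComb lam A B ⊆ logComb lam K L := by
  intro x hx u hu
  have hA' := suppFun_nonneg hA hA0 u
  have hB' := suppFun_nonneg hB hB0 u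
  have hAK' := suppFun_mono hK ⟨0, hA0⟩ hAK u
  have hBL' := suppFun_mono hL ⟨0, hB0⟩ hBL u
  exact (hx u hu).trans <| mul_le_mul (Real.rpow_le_rpow hA' hAK' h0)
    (Real.rpow_le_rpow hB' hBL' (sub_nonneg.2 h1)) (Real.rpow_nonneg hB' _)
    (Real.rpow_nonneg (hA'.trans hAK') _)

theorem logComb_subset_smul_add_smul {lam : ℝ} (h0 : 0 ≤ lam) (h1 : lam ≤ 1)
    (hA : IsCompact A) (hB : IsCompact B) (hAc : Convex ℝ A) (hBc : Convex ℝ B) (hA0 : 0 ∈ A)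
    (hB0 : 0 ∈ B) :
    logComb lam A B ⊆ lam • A + (1 - lam) • B := by
  intro x hx
  by_contra hxW
  obtain ⟨u, hu, hsep⟩ := exists_norm_eq_one_inner_lt_of_notMem
    ((hAc.smul lam).add (hBc.smul (1 - lam)))
    ((hA.smul lam).add (hB.smul (1 - lam))).isClosed
    ⟨0, by simpa using
      add_mem_add (smul_mem_smul_set (a := lam) hA0) (smul_mem_smul_set (a := 1 - lam) hB0)⟩
    hxW
  obtain ⟨a, ha, hha⟩ := exists_suppFun_eq_inner hA ⟨0, hA0⟩ u
  obtain ⟨b, hb, hhb⟩ := exists_suppFun_eq_inner hB ⟨0, hB0⟩ u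
  have hamgm := Real.geom_mean_le_arith_mean2_weighted h0 (sub_nonneg.2 h1)
    (suppFun_nonneg hA hA0 u) (suppFun_nonneg hB hB0 u) (add_sub_cancel lam 1)
  have hlt := hsep _ (add_mem_add (smul_mem_smul_set ha) (smul_mem_smul_set hb))
  rw [inner_add_right, real_inner_smul_right, real_inner_smul_right, ← hha, ← hhb,
    real_inner_comm] at hlt
  exact (hx u hu).not_gt (hamgm.trans_lt hlt)

end SupportFunction

section ConvexBody

variable {E : Type*} [NormedAddCommGroup E] [NormedSpace ℝ E] [MeasurableSpace E] [BorelSpace E]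
  [FiniteDimensional ℝ E] (μ : Measure E) [μ.IsAddHaarMeasure] {S : Set E}

theorem Convex.interior_nonempty_of_addHaar_ne_zero (hS : Convex ℝ S) (h : μ S ≠ 0) :
    (interior S).Nonempty := by
  by_contra hempty
  rw [not_nonempty_iff_eq_empty] at hempty
  refine h (measure_mono_null ?_ (hS.addHaar_frontier μ))
  rw [frontier, hempty, sdiff_empty]
  exact subset_closure

theorem Convex.closure_ae_eq (hS : Convex ℝ S) : closure S =ᵐ[μ] S :=
  ae_eq_set.2
    ⟨measure_mono_null (sdiff_subset_sdiff_right interior_subset) (hS.addHaar_frontier μ),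
      by simp [sdiff_eq_empty.2 subset_closure]⟩

end ConvexBody

theorem Convex.zero_mem_of_eq_neg {E : Type*} [AddCommGroup E] [Module ℝ E] {S : Set E}
    (hS : Convex ℝ S) (hSs : S = -S) (hne : S.Nonempty) : 0 ∈ S := by
  obtain ⟨x, hx⟩ := hne
  have hnx : -x ∈ S := hSs ▸ neg_mem_neg.2 hx
  simpa using hS hx hnx (by norm_num : (0 : ℝ) ≤ 1 / 2) (by norm_num : (0 : ℝ) ≤ 1 / 2)
    (by norm_num)

theorem isConvexBody_closure {n : ℕ} {S K : Set (EuclideanSpace ℝ (Fin n))} (hS : Convex ℝ S)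
    (hSK : S ⊆ K) (hK : IsCompact K) (h : volume S ≠ 0) : IsConvexBody (closure S) :=
  ⟨hS.closure, hK.closure_of_subset hSK,
    (hS.interior_nonempty_of_addHaar_ne_zero volume h).mono (interior_mono subset_closure)⟩

def IsLogConcave {E : Type*} [AddCommGroup E] [Module ℝ E] (f : E → ℝ) : Prop :=
  ∀ x y : E, ∀ lam ∈ Ioo (0 : ℝ) 1, f x ^ lam * f y ^ (1 - lam) ≤ f (lam • x + (1 - lam) • y)

namespace IsLogConcave

variable {E : Type*} [AddCommGroup E] [Module ℝ E] {f : E → ℝ}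

theorem rpow_mul_rpow_lt (hf : IsLogConcave f) {lam : ℝ} (hlam : lam ∈ Ioo 0 1) {s t : ℝ}
    (hs : 0 ≤ s) (ht : 0 ≤ t) {x y : E} (hx : s < f x) (hy : t < f y) :
    s ^ lam * t ^ (1 - lam) < f (lam • x + (1 - lam) • y) :=
  (mul_lt_mul'' (Real.rpow_lt_rpow hs hx hlam.1) (Real.rpow_lt_rpow ht hy (sub_pos.2 hlam.2))
    (Real.rpow_nonneg hs _) (Real.rpow_nonneg ht _)).trans_le (hf x y lam hlam)

theorem convex_superlevel (hf : IsLogConcave f) {t : ℝ} (ht : 0 ≤ t) :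
    Convex ℝ {x | t < f x} := by
  refine convex_iff_forall_pos.2 fun x hx y hy a b ha hb hab => ?_
  obtain rfl : b = 1 - a := eq_sub_of_add_eq' hab
  have := hf.rpow_mul_rpow_lt ⟨ha, by linarith⟩ ht ht hx hy
  rwa [← Real.rpow_add' ht (by simp), add_sub_cancel, Real.rpow_one] at this

theorem le_apply_zero (hf : IsLogConcave f) (heven : ∀ x, f (-x) = f x) {x : E} (hx : 0 ≤ f x) :
    f x ≤ f 0 := by
  have hmid : (1 / 2 : ℝ) • x + (1 - 1 / 2 : ℝ) • -x = 0 := by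
    rw [smul_neg, show (1 - 1 / 2 : ℝ) = 1 / 2 by norm_num, add_neg_cancel]
  have := hf x (-x) (1 / 2) ⟨by norm_num, by norm_num⟩
  rwa [heven, ← Real.rpow_add' hx (by norm_num), hmid,
    show (1 / 2 + (1 - 1 / 2) : ℝ) = 1 by norm_num, Real.rpow_one] at this

end IsLogConcave

def LogBrunnMinkowskiLebesgue (n : ℕ) : Prop :=
  ∀ K L : Set (EuclideanSpace ℝ (Fin n)), IsConvexBody K → K = -K → IsConvexBody L → L = -L →
    ∀ lam ∈ Ioo (0 : ℝ) 1, volume K ^ lam * volume L ^ (1 - lam) ≤ volume (logComb lam K L)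

section LevelSets

variable {n : ℕ} {f : EuclideanSpace ℝ (Fin n) → ℝ}

theorem superlevel_inter_eq_neg (heven : ∀ x, f (-x) = f x) {K : Set (EuclideanSpace ℝ (Fin n))}
    (hK : K = -K) (t : ℝ) : {x | t < f x} ∩ K = -({x | t < f x} ∩ K) := by
  rw [inter_neg, ← hK]
  congr 1
  ext x
  simp [heven]

theorem rpow_mul_rpow_volume_superlevel_inter_le (hLBM : LogBrunnMinkowskiLebesgue n)
    (hf : IsLogConcave f) (heven : ∀ x, f (-x) = f x) {K L : Set (EuclideanSpace ℝ (Fin n))}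
    (hK : IsConvexBody K) (hKs : K = -K) (hL : IsConvexBody L) (hLs : L = -L) {lam : ℝ}
    (hlam : lam ∈ Ioo 0 1) {s t : ℝ} (hs : 0 ≤ s) (ht : 0 ≤ t) :
    volume ({x | s < f x} ∩ K) ^ lam * volume ({x | t < f x} ∩ L) ^ (1 - lam)
      ≤ volume ({x | s ^ lam * t ^ (1 - lam) < f x} ∩ logComb lam K L) := by
  have h0 := hlam.1.le
  have h1 := hlam.2.le
  set SK := {x | s < f x} ∩ K
  set SL := {x | t < f x} ∩ L
  rcases eq_or_ne (volume SK) 0 with hSK | hSK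
  · simp [hSK, ENNReal.zero_rpow_of_pos hlam.1]
  rcases eq_or_ne (volume SL) 0 with hSL | hSL
  · simp [hSL, ENNReal.zero_rpow_of_pos (sub_pos.2 hlam.2)]
  have hSKc : Convex ℝ SK := (hf.convex_superlevel hs).inter hK.1
  have hSLc : Convex ℝ SL := (hf.convex_superlevel ht).inter hL.1
  have hSKs := superlevel_inter_eq_neg heven hKs s
  have hSLs := superlevel_inter_eq_neg heven hLs t
  have hbodyK := isConvexBody_closure hSKc inter_subset_right hK.2.1 hSK
  have hbodyL := isConvexBody_closure hSLc inter_subset_right hL.2.1 hSL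
  have h0K : 0 ∈ closure SK :=
    subset_closure (hSKc.zero_mem_of_eq_neg hSKs (nonempty_of_measure_ne_zero hSK))
  have h0L : 0 ∈ closure SL :=
    subset_closure (hSLc.zero_mem_of_eq_neg hSLs (nonempty_of_measure_ne_zero hSL))
  set W := lam • SK + (1 - lam) • SL
  have hW : W ⊆ {x | s ^ lam * t ^ (1 - lam) < f x} := by
    rintro _ ⟨_, ⟨x, hx, rfl⟩, _, ⟨y, hy, rfl⟩, rfl⟩
    exact hf.rpow_mul_rpow_lt hlam hs ht hx.1 hy.1
  have hclosure : lam • closure SK + (1 - lam) • closure SL ⊆ closure W := by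
    rintro _ ⟨_, ⟨x, hx, rfl⟩, _, ⟨y, hy, rfl⟩, rfl⟩
    exact map_mem_closure₂ (f := fun a b => lam • a + (1 - lam) • b) (by fun_prop) hx hy
      fun a ha b hb => add_mem_add (smul_mem_smul_set ha) (smul_mem_smul_set hb)
  have hsub : logComb lam (closure SK) (closure SL) ⊆ closure W ∩ logComb lam K L :=
    subset_inter
      ((logComb_subset_smul_add_smul h0 h1 hbodyK.2.1 hbodyL.2.1 hbodyK.1 hbodyL.1 h0K
        h0L).trans hclosure)
      (logComb_mono h0 h1 hbodyK.2.1 hbodyL.2.1 h0K h0L hK.2.1 hL.2.1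
        (closure_minimal inter_subset_right hK.2.1.isClosed)
        (closure_minimal inter_subset_right hL.2.1.isClosed))
  calc volume SK ^ lam * volume SL ^ (1 - lam)
      ≤ volume (closure SK) ^ lam * volume (closure SL) ^ (1 - lam) := by
        gcongr <;> exact subset_closure
    _ ≤ volume (logComb lam (closure SK) (closure SL)) :=
        hLBM _ _ hbodyK (by rw [neg_closure, ← hSKs]) hbodyL (by rw [neg_closure, ← hSLs]) lam
          hlam
    _ ≤ volume (closure W ∩ logComb lam K L) := measure_mono hsub
    _ = volume (W ∩ logComb lam K L) :=
        measure_congr ((((hSKc.smul lam).add (hSLc.smul (1 - lam))).closure_ae_eq volume).inter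
          Filter.EventuallyEq.rfl)
    _ ≤ volume ({x | s ^ lam * t ^ (1 - lam) < f x} ∩ logComb lam K L) :=
        measure_mono (inter_subset_inter_left _ hW)

end LevelSets

theorem logBM_lebesgue_implies_logBM_logconcave_general (n : ℕ)
    (hLBM : ∀ K L : Set (EuclideanSpace ℝ (Fin n)),
      IsConvexBody K → K = -K → IsConvexBody L → L = -L →
      ∀ lam : ℝ, lam ∈ Set.Ioo (0:ℝ) 1 →
        volume K ^ lam * volume L ^ (1 - lam) ≤ volume (logComb lam K L)) :
    ∀ f : EuclideanSpace ℝ (Fin n) → ℝ, IsEvenLogConcaveDensity f →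
      ∀ K L : Set (EuclideanSpace ℝ (Fin n)),
        IsConvexBody K → K = -K → IsConvexBody L → L = -L →
        ∀ lam : ℝ, lam ∈ Set.Ioo (0:ℝ) 1 →
          (∫ x in K, f x) ^ lam * (∫ x in L, f x) ^ (1 - lam)
            ≤ ∫ x in logComb lam K L, f x := by
  intro f ⟨hfint, hf0, heven, hf⟩ K L hK hKs hL hLs lam hlam
  replace hf : IsLogConcave f := hf
  have hintegral : ∀ S, ∫ x in S, f x = (∫⁻ a, expLayer (volume.restrict S) f a).toReal :=
    fun S => by
      rw [lintegral_expLayer (ae_of_all _ hf0) hfint.aemeasurable.restrict]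
      exact integral_eq_lintegral_of_nonneg_ae (ae_of_all _ hf0)
        hfint.aestronglyMeasurable.restrict
  have hsup : ∀ S, IsCompact S → ⨆ a, expLayer (volume.restrict S) f a ≠ ⊤ := fun S hS =>
    ne_top_of_le_ne_top (ENNReal.mul_ne_top ENNReal.ofReal_ne_top
        (by simpa using hS.measure_lt_top.ne))
      (iSup_le (expLayer_le fun x => hf.le_apply_zero heven (hf0 x)))
  rw [hintegral, hintegral, hintegral, ENNReal.toReal_rpow, ENNReal.toReal_rpow,
    ← ENNReal.toReal_mul]
  refine ENNReal.toReal_mono ?_ <| prekopa_leindler hlam measurable_expLayer measurable_expLayer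
    measurable_expLayer (hsup K hK.2.1) (hsup L hL.2.1) <|
      expLayer_rpow_mul_rpow_le hlam.1.le hlam.2.le fun s t hs ht => ?_
  · rw [lintegral_expLayer (ae_of_all _ hf0) hfint.aemeasurable.restrict]
    exact hfint.restrict.lintegral_lt_top.ne
  · rw [Measure.restrict_apply' hK.2.1.measurableSet,
      Measure.restrict_apply' hL.2.1.measurableSet,
      Measure.restrict_apply' (isClosed_logComb lam K L).measurableSet]
    exact rpow_mul_rpow_volume_superlevel_inter_le hLBM hf heven hK hKs hL hLs hlam hs.le ht.le

/-- If the log-Brunn-Minkowski inequality holds for the Lebesgue measure in dimension `n`,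
then it holds for every even log-concave density in dimension `n`. -/
theorem logBM_lebesgue_implies_logBM_logconcave (n : ℕ) (hn : 1 ≤ n)
    (hLBM : ∀ K L : Set (EuclideanSpace ℝ (Fin n)),
      IsConvexBody K → K = -K → IsConvexBody L → L = -L →
      ∀ lam : ℝ, lam ∈ Set.Ioo (0:ℝ) 1 →
        volume K ^ lam * volume L ^ (1 - lam) ≤ volume (logComb lam K L)) :
    ∀ f : EuclideanSpace ℝ (Fin n) → ℝ, IsEvenLogConcaveDensity f →
      ∀ K L : Set (EuclideanSpace ℝ (Fin n)),
        IsConvexBody K → K = -K → IsConvexBody L → L = -L →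
        ∀ lam : ℝ, lam ∈ Set.Ioo (0:ℝ) 1 →
          (∫ x in K, f x) ^ lam * (∫ x in L, f x) ^ (1 - lam)
            ≤ ∫ x in logComb lam K L, f x :=
  logBM_lebesgue_implies_logBM_logconcave_general n hLBM
end
end

section
/- Fix a dimension n and let f : ℝⁿ → [0,∞) be a measurable, locally integrable function such that the logarithmic Brunn–Minkowski inequality holds for the density f: for all symmetric convex bodies K, L in ℝⁿ and all λ ∈ (0,1), ∫_{λ·K +₀ (1−λ)·L} f(x) dx ≥ (∫_K f(x) dx)^λ · (∫_L f(x) dx)^{1−λ}. Then for every invertible linear map T : ℝⁿ → ℝⁿ and all real numbers a₁,…,aₙ, the function ℝ ∋ t ↦ ∫_{B(t)} f(Tx) dx is log-concave, where B(t) = ∏_{i=1}^n [−e^{a_i t}, e^{a_i t}] (that is, B(t) = e^{At}C_n for the diagonal matrix A = diag(a₁,…,aₙ) and the cube C_n = [−1,1]ⁿ). -/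
/-!
The boxes `B(t) = e^{At}Cₙ` and their images under `T` are symmetric convex bodies. The
functional `x ↦ (T⁻¹x)ᵢ` is bounded in absolute value by `e^{aᵢs}` on `T B(s)` and by `e^{aᵢt}`
on `T B(t)`; testing the definition of the logarithmic combination against the unit vector
representing it bounds it by `e^{aᵢ(λs+(1-λ)t)}` there, so
`λ·T B(s) +₀ (1-λ)·T B(t) ⊆ T B(λs+(1-λ)t)`. Log-Brunn–Minkowski for `f`, monotonicity of the
integral of `f ≥ 0`, and the substitution `x = Ty` give the claim; the Jacobian `|det T|` factors
out of both sides because `λ + (1-λ) = 1`.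
-/

open MeasureTheory Set Pointwise

noncomputable section

open scoped InnerProductSpace Topology

section Box

variable {ι : Type*}

def box (r : ι → ℝ) : Set (EuclideanSpace ℝ ι) := {x | ∀ i, |x i| ≤ r i}

theorem box_eq_preimage_pi [Fintype ι] (r : ι → ℝ) :
    box r = EuclideanSpace.equiv ι ℝ ⁻¹' univ.pi fun i => Icc (-r i) (r i) := by
  ext x
  simp only [box, mem_ofPred_eq, mem_preimage, mem_univ_pi, mem_Icc, abs_le]
  rfl

theorem isCompact_box [Fintype ι] (r : ι → ℝ) : IsCompact (box r) := by
  rw [box_eq_preimage_pi]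
  exact (EuclideanSpace.equiv ι ℝ).toHomeomorph.isCompact_preimage.2
    (isCompact_univ_pi fun _ => isCompact_Icc)

theorem measurableSet_box [Fintype ι] (r : ι → ℝ) : MeasurableSet (box r) :=
  (isCompact_box r).isClosed.measurableSet

theorem convex_box [Fintype ι] (r : ι → ℝ) : Convex ℝ (box r) := by
  rw [box_eq_preimage_pi]
  exact (convex_pi fun _ _ => convex_Icc _ _).linear_preimage
    (EuclideanSpace.equiv ι ℝ).toLinearEquiv.toLinearMap

theorem zero_mem_box {r : ι → ℝ} (hr : ∀ i, 0 ≤ r i) : (0 : EuclideanSpace ℝ ι) ∈ box r :=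
  fun i => by simpa using hr i

theorem zero_mem_interior_box [Finite ι] {r : ι → ℝ} (hr : ∀ i, 0 < r i) :
    (0 : EuclideanSpace ℝ ι) ∈ interior (box r) := by
  have hcoord : ∀ i, ∀ᶠ x : EuclideanSpace ℝ ι in 𝓝 0, |x i| < r i := fun i =>
    (by fun_prop : Continuous fun x : EuclideanSpace ℝ ι => |x i|).continuousAt.eventually_lt
      continuousAt_const (by simpa using hr i)
  exact mem_interior_iff_mem_nhds.2 <|
    (Filter.eventually_all.2 hcoord).mono fun _ hx i => (hx i).le

theorem neg_box (r : ι → ℝ) : -box r = box r := by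
  ext x
  simp [box]

end Box

section ConvexBody

variable {n : ℕ}

theorem isConvexBody_box {r : Fin n → ℝ} (hr : ∀ i, 0 < r i) : IsConvexBody (box r) :=
  ⟨convex_box r, isCompact_box r, ⟨0, zero_mem_interior_box hr⟩⟩

theorem IsConvexBody.image_linearEquiv {K : Set (EuclideanSpace ℝ (Fin n))} (hK : IsConvexBody K)
    (T : EuclideanSpace ℝ (Fin n) ≃ₗ[ℝ] EuclideanSpace ℝ (Fin n)) : IsConvexBody (T '' K) := by
  obtain ⟨hconv, hcomp, hint⟩ := hK
  exact ⟨hconv.linear_image T.toLinearMap, hcomp.image T.toContinuousLinearEquiv.continuous,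
    (hint.image T).mono (T.toContinuousLinearEquiv.isOpenMap.image_interior_subset K)⟩

end ConvexBody

theorem image_eq_neg_of_eq_neg {E G F : Type*} [AddGroup E] [SubtractionMonoid G]
    [FunLike F E G] [AddMonoidHomClass F E G] (f : F) {K : Set E} (hK : K = -K) :
    f '' K = -(f '' K) := by
  nth_rw 1 [hK]
  exact image_neg_of_apply_neg_eq_neg fun x _ => map_neg f x

theorem mul_rpow_mul_rpow_one_sub {a b c : ℝ} (lam : ℝ) (hc : 0 ≤ c) (ha : 0 ≤ a) (hb : 0 ≤ b) :
    (c * a) ^ lam * (c * b) ^ (1 - lam) = c * (a ^ lam * b ^ (1 - lam)) := by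
  rw [Real.mul_rpow hc ha, Real.mul_rpow hc hb, mul_mul_mul_comm,
    ← Real.rpow_add' hc (by norm_num), add_sub_cancel, Real.rpow_one]

section LogComb

variable {n : ℕ} {K L : Set (EuclideanSpace ℝ (Fin n))} {u : EuclideanSpace ℝ (Fin n)} {α : ℝ}

theorem suppFun_le (h : ∀ y ∈ K, ⟪u, y⟫_ℝ ≤ α) (hα : 0 ≤ α) : suppFun K u ≤ α :=
  Real.sSup_le (by rintro _ ⟨y, hy, rfl⟩; exact h y hy) hα

theorem suppFun_nonneg_s15 (h0 : 0 ∈ K) (h : ∀ y ∈ K, ⟪u, y⟫_ℝ ≤ α) : 0 ≤ suppFun K u :=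
  le_csSup ⟨α, by rintro _ ⟨y, hy, rfl⟩; exact h y hy⟩ ⟨0, h0, inner_zero_right u⟩

theorem le_of_mem_logComb {lam β : ℝ} {x : EuclideanSpace ℝ (Fin n)} (hx : x ∈ logComb lam K L)
    (hlam : lam ∈ Icc 0 1) (hK0 : 0 ∈ K) (hL0 : 0 ∈ L)
    (ℓ : StrongDual ℝ (EuclideanSpace ℝ (Fin n))) (hK : ∀ y ∈ K, ℓ y ≤ α)
    (hL : ∀ y ∈ L, ℓ y ≤ β) : ℓ x ≤ α ^ lam * β ^ (1 - lam) := by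
  set v := (InnerProductSpace.toDual ℝ _).symm ℓ
  have hv : ∀ y, ⟪v, y⟫_ℝ = ℓ y := fun y => InnerProductSpace.toDual_symm_apply
  have hα : 0 ≤ α := by simpa using hK 0 hK0
  have hβ : 0 ≤ β := by simpa using hL 0 hL0
  rcases eq_or_ne v 0 with hv0 | hv0
  · rw [← hv, hv0, inner_zero_left]
    positivity
  set c := ‖v‖⁻¹
  have hc : 0 < c := inv_pos.2 (norm_pos_iff.2 hv0)
  have hsupp {M : Set (EuclideanSpace ℝ (Fin n))} {γ : ℝ} (hM0 : 0 ∈ M) (hγ : 0 ≤ γ)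
      (h : ∀ y ∈ M, ℓ y ≤ γ) : 0 ≤ suppFun M (c • v) ∧ suppFun M (c • v) ≤ c * γ := by
    have hbound : ∀ y ∈ M, ⟪c • v, y⟫_ℝ ≤ c * γ := fun y hy => by
      rw [real_inner_smul_left, hv]
      exact mul_le_mul_of_nonneg_left (h y hy) hc.le
    exact ⟨suppFun_nonneg_s15 hM0 hbound, suppFun_le hbound (by positivity)⟩
  have hK' := hsupp hK0 hα hK
  have hL' := hsupp hL0 hβ hL
  refine le_of_mul_le_mul_left ?_ hc
  calc c * ℓ x = ⟪x, c • v⟫_ℝ := by rw [real_inner_comm, real_inner_smul_left, hv]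
    _ ≤ suppFun K (c • v) ^ lam * suppFun L (c • v) ^ (1 - lam) := hx _ (norm_smul_inv_norm hv0)
    _ ≤ (c * α) ^ lam * (c * β) ^ (1 - lam) :=
      mul_le_mul (Real.rpow_le_rpow hK'.1 hK'.2 hlam.1)
        (Real.rpow_le_rpow hL'.1 hL'.2 (sub_nonneg.2 hlam.2)) (Real.rpow_nonneg hL'.1 _)
        (by positivity)
    _ = c * (α ^ lam * β ^ (1 - lam)) := mul_rpow_mul_rpow_one_sub lam hc.le hα hβ

theorem logComb_image_box_subset (T : EuclideanSpace ℝ (Fin n) ≃ₗ[ℝ] EuclideanSpace ℝ (Fin n))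
    {lam : ℝ} {r r' : Fin n → ℝ} (hr : ∀ i, 0 ≤ r i) (hr' : ∀ i, 0 ≤ r' i) (hlam : lam ∈ Icc 0 1) :
    logComb lam (T '' box r) (T '' box r') ⊆ T '' box fun i => r i ^ lam * r' i ^ (1 - lam) := by
  intro x hx
  refine ⟨T.symm x, fun i => ?_, T.apply_symm_apply x⟩
  set ℓ : StrongDual ℝ (EuclideanSpace ℝ (Fin n)) :=
    (EuclideanSpace.proj i).comp (T.symm.toContinuousLinearEquiv : _ →L[ℝ] _)
  have hbound (ρ : Fin n → ℝ) : ∀ y ∈ T '' box ρ, |ℓ y| ≤ ρ i := by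
    rintro _ ⟨w, hw, rfl⟩
    simpa [ℓ] using hw i
  have h0 {ρ : Fin n → ℝ} (hρ : ∀ i, 0 ≤ ρ i) : 0 ∈ T '' box ρ := ⟨0, zero_mem_box hρ, map_zero T⟩
  have key (ℓ' : StrongDual ℝ (EuclideanSpace ℝ (Fin n))) (h : ∀ y, ℓ' y ≤ |ℓ y|) :
      ℓ' x ≤ r i ^ lam * r' i ^ (1 - lam) :=
    le_of_mem_logComb hx hlam (h0 hr) (h0 hr') ℓ' (fun y hy => (h y).trans (hbound r y hy))
      (fun y hy => (h y).trans (hbound r' y hy))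
  exact abs_le.2 ⟨neg_le.1 (key (-ℓ) fun y => neg_le_abs _), key ℓ fun y => le_abs_self _⟩

end LogComb

theorem setIntegral_image_linearEquiv {E F : Type*} [NormedAddCommGroup E] [NormedSpace ℝ E]
    [FiniteDimensional ℝ E] [MeasurableSpace E] [BorelSpace E] [NormedAddCommGroup F]
    [NormedSpace ℝ F] (μ : Measure E) [μ.IsAddHaarMeasure] (T : E ≃ₗ[ℝ] E) (g : E → F)
    {B : Set E} (hB : MeasurableSet B) :
    ∫ x in T '' B, g x ∂μ = |LinearMap.det (T : E →ₗ[ℝ] E)| • ∫ x in B, g (T x) ∂μ := by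
  have := integral_image_eq_integral_abs_det_fderiv_smul μ hB
    (fun x _ => T.toContinuousLinearEquiv.hasFDerivAt.hasFDerivWithinAt) T.injective.injOn g
  rwa [integral_smul] at this

theorem logBM_implies_logconcave_on_boxes_general (n : ℕ)
    (f : EuclideanSpace ℝ (Fin n) → ℝ)
    (hloc : LocallyIntegrable f volume) (hpos : ∀ x, 0 ≤ f x)
    (hLBM : ∀ K L : Set (EuclideanSpace ℝ (Fin n)),
      IsConvexBody K → K = -K → IsConvexBody L → L = -L →
      ∀ lam : ℝ, lam ∈ Set.Ioo (0:ℝ) 1 →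
        (∫ x in K, f x) ^ lam * (∫ x in L, f x) ^ (1 - lam)
          ≤ ∫ x in logComb lam K L, f x) :
    ∀ T : EuclideanSpace ℝ (Fin n) ≃ₗ[ℝ] EuclideanSpace ℝ (Fin n),
    ∀ a : Fin n → ℝ, ∀ s t lam : ℝ, lam ∈ Set.Ioo (0:ℝ) 1 →
      (∫ x in {x : EuclideanSpace ℝ (Fin n) | ∀ i, |x i| ≤ Real.exp (a i * s)}, f (T x)) ^ lam *
          (∫ x in {x : EuclideanSpace ℝ (Fin n) | ∀ i, |x i| ≤ Real.exp (a i * t)}, f (T x)) ^ (1 - lam)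
        ≤ ∫ x in {x : EuclideanSpace ℝ (Fin n) |
            ∀ i, |x i| ≤ Real.exp (a i * (lam * s + (1 - lam) * t))}, f (T x) := by
  intro T a s t lam hlam
  set r : ℝ → Fin n → ℝ := fun u i => Real.exp (a i * u)
  change (∫ x in box (r s), f (T x)) ^ lam * (∫ x in box (r t), f (T x)) ^ (1 - lam)
    ≤ ∫ x in box (r (lam * s + (1 - lam) * t)), f (T x)
  set d := |LinearMap.det (T : EuclideanSpace ℝ (Fin n) →ₗ[ℝ] EuclideanSpace ℝ (Fin n))|
  have hd : 0 < d := abs_pos.2 (LinearEquiv.isUnit_det' T).ne_zero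
  have hcov (u : ℝ) : ∫ x in T '' box (r u), f x = d * ∫ x in box (r u), f (T x) :=
    setIntegral_image_linearEquiv volume T f (measurableSet_box _)
  have hnonneg (u : ℝ) : 0 ≤ ∫ x in box (r u), f (T x) :=
    setIntegral_nonneg (measurableSet_box _) fun x _ => hpos _
  have hr (u : ℝ) (i : Fin n) : 0 < r u i := Real.exp_pos _
  have hsub : logComb lam (T '' box (r s)) (T '' box (r t)) ⊆
      T '' box (r (lam * s + (1 - lam) * t)) := by
    convert logComb_image_box_subset T (fun i => (hr s i).le) (fun i => (hr t i).le)
      (Ioo_subset_Icc_self hlam) using 4 with i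
    simp only [r, ← Real.exp_mul, ← Real.exp_add]
    ring_nf
  refine le_of_mul_le_mul_left ?_ hd
  calc d * ((∫ x in box (r s), f (T x)) ^ lam * (∫ x in box (r t), f (T x)) ^ (1 - lam))
      = (∫ x in T '' box (r s), f x) ^ lam * (∫ x in T '' box (r t), f x) ^ (1 - lam) := by
        rw [hcov, hcov, mul_rpow_mul_rpow_one_sub lam hd.le (hnonneg s) (hnonneg t)]
    _ ≤ ∫ x in logComb lam (T '' box (r s)) (T '' box (r t)), f x :=
        hLBM _ _ ((isConvexBody_box (hr s)).image_linearEquiv T)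
          (image_eq_neg_of_eq_neg T (neg_box _).symm)
          ((isConvexBody_box (hr t)).image_linearEquiv T)
          (image_eq_neg_of_eq_neg T (neg_box _).symm) lam hlam
    _ ≤ ∫ x in T '' box (r (lam * s + (1 - lam) * t)), f x :=
        setIntegral_mono_set
          (hloc.integrableOn_isCompact ((isCompact_box _).image T.continuous_of_finiteDimensional))
          (ae_of_all _ hpos) hsub.eventuallyLE
    _ = d * ∫ x in box (r (lam * s + (1 - lam) * t)), f (T x) := hcov _

/-- Theorem 5.1 (iii): if the log-Brunn-Minkowski inequality holds for the density `f`, then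
`t ↦ ∫_{e^{At}Cₙ} f(Tx) dx` is log-concave for every invertible linear `T` and diagonal `A`. -/
theorem logBM_implies_logconcave_on_boxes (n : ℕ)
    (f : EuclideanSpace ℝ (Fin n) → ℝ)
    (hmeas : Measurable f) (hloc : LocallyIntegrable f volume) (hpos : ∀ x, 0 ≤ f x)
    (hLBM : ∀ K L : Set (EuclideanSpace ℝ (Fin n)),
      IsConvexBody K → K = -K → IsConvexBody L → L = -L →
      ∀ lam : ℝ, lam ∈ Set.Ioo (0:ℝ) 1 →
        (∫ x in K, f x) ^ lam * (∫ x in L, f x) ^ (1 - lam)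
          ≤ ∫ x in logComb lam K L, f x) :
    ∀ T : EuclideanSpace ℝ (Fin n) ≃ₗ[ℝ] EuclideanSpace ℝ (Fin n),
    ∀ a : Fin n → ℝ, ∀ s t lam : ℝ, lam ∈ Set.Ioo (0:ℝ) 1 →
      (∫ x in {x : EuclideanSpace ℝ (Fin n) | ∀ i, |x i| ≤ Real.exp (a i * s)}, f (T x)) ^ lam *
          (∫ x in {x : EuclideanSpace ℝ (Fin n) | ∀ i, |x i| ≤ Real.exp (a i * t)}, f (T x)) ^ (1 - lam)
        ≤ ∫ x in {x : EuclideanSpace ℝ (Fin n) |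
            ∀ i, |x i| ≤ Real.exp (a i * (lam * s + (1 - lam) * t))}, f (T x) :=
  logBM_implies_logconcave_on_boxes_general n f hloc hpos hLBM
end
end
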